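/- Let m, n ≥ 2 be integers and let p_c ∈ (0,1) be the unique fixed point of f_{m,n}(p) = 1 − (1 − p^n)^m in (0,1). Then for every p ∈ [0, p_c), the sequence of iterates f_{m,n}^{∘k}(p) converges to 0 as k → ∞. -/

import Mathlib

/-!
Bernoulli's inequality gives `f q ≤ m q ^ n`, so `f q < q` for small `q > 0` since `n ≥ 2`.
Since `f` has no fixed point in `(0, p_c)`, the intermediate value theorem propagates this to
`f q < q` on all of `(0, p_c)`. Below `p_c` the iterates therefore decrease and stay nonnegative;
their limit is a fixed point of `f` in `[0, p_c)`, which can only be `0`.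
-/

open Set Filter Topology

theorem lt_self_of_lt_self_of_forall_ne {f : ℝ → ℝ} {a b : ℝ} (hab : a ≤ b)
    (hf : ContinuousOn f (Icc a b)) (ha : f a < a) (hne : ∀ x ∈ Icc a b, f x ≠ x) :
    f b < b := by
  by_contra! hb
  obtain ⟨x, hx, hfx⟩ : (0 : ℝ) ∈ (fun x => f x - x) '' Icc a b :=
    intermediate_value_Icc (f := fun x => f x - x) hab (hf.sub continuousOn_id)
      ⟨by linarith, by linarith⟩
  exact hne x hx (sub_eq_zero.mp hfx)

theorem tendsto_iterate_of_le_self {f : ℝ → ℝ} {a c x : ℝ} (hf : Continuous f)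
    (hle : ∀ y ∈ Ico a c, a ≤ f y ∧ f y ≤ y) (hfix : ∀ y ∈ Ico a c, f y = y → y = a)
    (hx : x ∈ Ico a c) : Tendsto (fun k => f^[k] x) atTop (𝓝 a) := by
  have hmem : ∀ k, f^[k] x ∈ Ico a c := by
    intro k
    induction k with
    | zero => exact hx
    | succ k ih =>
      rw [Function.iterate_succ_apply']
      exact ⟨(hle _ ih).1, (hle _ ih).2.trans_lt ih.2⟩
  have hanti : Antitone fun k => f^[k] x := antitone_nat_of_succ_le fun k => by
    rw [Function.iterate_succ_apply']
    exact (hle _ (hmem k)).2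
  have hbdd : BddBelow (range fun k => f^[k] x) := ⟨a, by rintro _ ⟨k, rfl⟩; exact (hmem k).1⟩
  have hlim := tendsto_atTop_ciInf hanti hbdd
  have hL : (⨅ k, f^[k] x) ∈ Ico a c :=
    ⟨le_ciInf fun k => (hmem k).1, (ciInf_le hbdd 0).trans_lt (hmem 0).2⟩
  rwa [← hfix _ hL (isFixedPt_of_tendsto_iterate hlim hf.continuousAt)]

def diamondMap (m n : ℕ) (q : ℝ) : ℝ := 1 - (1 - q ^ n) ^ m

namespace diamondMap

variable {m n : ℕ} {q : ℝ}

theorem continuous : Continuous (diamondMap m n) := by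
  unfold diamondMap
  fun_prop

theorem nonneg (hq₀ : 0 ≤ q) (hq₁ : q ≤ 1) : 0 ≤ diamondMap m n q := by
  have : (1 - q ^ n) ^ m ≤ 1 :=
    pow_le_one₀ (sub_nonneg.mpr (pow_le_one₀ hq₀ hq₁)) (sub_le_self _ (pow_nonneg hq₀ n))
  unfold diamondMap
  linarith

theorem le_mul_pow (hq₀ : 0 ≤ q) (hq₁ : q ≤ 1) : diamondMap m n q ≤ m * q ^ n := by
  have := one_add_mul_sub_le_pow (a := 1 - q ^ n) (by linarith [pow_le_one₀ (n := n) hq₀ hq₁]) m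
  unfold diamondMap
  linarith

theorem lt_self_of_mul_lt_one (hn : 2 ≤ n) (hq₀ : 0 < q) (hq₁ : q ≤ 1) (hmq : m * q < 1) :
    diamondMap m n q < q :=
  calc diamondMap m n q ≤ m * q ^ n := le_mul_pow hq₀.le hq₁
    _ ≤ m * q ^ 2 := by gcongr ?_ * ?_; exact pow_le_pow_of_le_one hq₀.le hq₁ hn
    _ = (m * q) * q := by ring
    _ < q := mul_lt_of_lt_one_left hq₀ hmq

theorem lt_self (hn : 2 ≤ n) {p_c : ℝ} (hpc : p_c ≤ 1)
    (huniq : ∀ q ∈ Ioo (0 : ℝ) 1, diamondMap m n q = q → q = p_c)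
    (hq₀ : 0 < q) (hq : q < p_c) : diamondMap m n q < q := by
  set ε := min q (1 / (m + 1))
  have hε₀ : 0 < ε := lt_min hq₀ (by positivity)
  have hmε : m * ε < 1 :=
    calc m * ε ≤ m * (1 / (m + 1)) := by gcongr; exact min_le_right _ _
      _ < 1 := by rw [mul_one_div, div_lt_one (by positivity)]; linarith
  refine lt_self_of_lt_self_of_forall_ne (min_le_left _ _) continuous.continuousOn
    (lt_self_of_mul_lt_one hn hε₀ (by linarith [min_le_left q (1 / (m + 1))]) hmε) ?_
  intro r ⟨hεr, hrq⟩ hfix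
  have := huniq r ⟨hε₀.trans_le hεr, by linarith⟩ hfix
  linarith

end diamondMap

theorem diamond_iterates_tendsto_zero_general (m n : ℕ) (hn : 2 ≤ n)
    (p_c : ℝ) (hpc : p_c ∈ Set.Ioo (0 : ℝ) 1)
    (huniq : ∀ q ∈ Set.Ioo (0 : ℝ) 1, 1 - (1 - q ^ n) ^ m = q → q = p_c) :
    ∀ p ∈ Set.Ico (0 : ℝ) p_c,
      Filter.Tendsto (fun k : ℕ => (fun q : ℝ => 1 - (1 - q ^ n) ^ m)^[k] p)
        Filter.atTop (nhds 0) := by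
  intro p hp
  have hle : ∀ q ∈ Ico (0 : ℝ) p_c, 0 ≤ diamondMap m n q ∧ diamondMap m n q ≤ q := by
    rintro q ⟨hq₀, hq⟩
    refine ⟨diamondMap.nonneg hq₀ (by linarith [hpc.2]), ?_⟩
    rcases hq₀.eq_or_lt with rfl | hq₀
    · simp [diamondMap, zero_pow (by omega : n ≠ 0)]
    · exact (diamondMap.lt_self hn hpc.2.le huniq hq₀ hq).le
  have hfix : ∀ q ∈ Ico (0 : ℝ) p_c, diamondMap m n q = q → q = 0 := by
    rintro q ⟨hq₀, hq⟩ hq_fix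
    by_contra hne
    have := huniq q ⟨lt_of_le_of_ne hq₀ (Ne.symm hne), hq.trans hpc.2⟩ hq_fix
    linarith
  exact tendsto_iterate_of_le_self diamondMap.continuous hle hfix hp

/-- Let `m, n ≥ 2` be integers and `p_c ∈ (0,1)` the unique fixed point of
`f_{m,n}(p) = 1 − (1 − p^n)^m` in `(0,1)`. Then for every `p ∈ [0, p_c)` the iterates
`f_{m,n}^{∘k}(p)` converge to `0` as `k → ∞`. -/
theorem diamond_iterates_tendsto_zero (m n : ℕ) (hm : 2 ≤ m) (hn : 2 ≤ n)
    (p_c : ℝ) (hpc : p_c ∈ Set.Ioo (0 : ℝ) 1) (hfix : 1 - (1 - p_c ^ n) ^ m = p_c)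
    (huniq : ∀ q ∈ Set.Ioo (0 : ℝ) 1, 1 - (1 - q ^ n) ^ m = q → q = p_c) :
    ∀ p ∈ Set.Ico (0 : ℝ) p_c,
      Filter.Tendsto (fun k : ℕ => (fun q : ℝ => 1 - (1 - q ^ n) ^ m)^[k] p)
        Filter.atTop (nhds 0) :=
  diamond_iterates_tendsto_zero_general m n hn p_c hpc huniq
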